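/- Upper bound for K: with θ₁ = g(ρ_c)/g(ρ_e) and θ₂ = 1 − θ₁, the constant K = d_{c1} − θ₁d_{e1} satisfies K < θ₂ < 1, where d_{c1} = d₁(l_{c1},l_{c2},l_{c3}) and d_{e1} = d₁(l_{e1},l_{e2},l_{e3}). -/

import Mathlib

/-!
Put `s j = c j ^ 2 + ρc` and `δ = ρe - ρc`, so that the exterior ellipsoid has squared
semi-axes `s j + δ`. With `G t = √(∏ (s j + t))` and `f t = 1 / ((s 0 + t) G t)`, the two
depolarization factors are `G 0 / 2 * ∫_{(0,∞)} f` and `G δ / 2 * ∫_{(δ,∞)} f`, hence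
`K = G 0 / 2 * ∫_0^δ f`. Meanwhile `θ₂ = G 0 * (1 / G 0 - 1 / G δ) = G 0 * ∫_0^δ D`
with `D = -(1 / G)' = (∑ 1 / (s j + t)) / (2 G)`, and `f < 2 D` pointwise.
-/

open MeasureTheory

/-- The depolarization factor in direction `j` of an ellipsoid with semi-axis lengths
`l 0, l 1, l 2`. -/
noncomputable def depol (j : Fin 3) (l : Fin 3 → ℝ) : ℝ :=
  (l 0 * l 1 * l 2) / 2 *
    ∫ y in Set.Ioi (0 : ℝ),
      1 / ((l j ^ 2 + y) * Real.sqrt ((l 0 ^ 2 + y) * (l 1 ^ 2 + y) * (l 2 ^ 2 + y)))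

open Set Filter Topology

theorem setIntegral_Ioi_comp_add_right (f : ℝ → ℝ) (a δ : ℝ) :
    ∫ y in Ioi a, f (y + δ) = ∫ y in Ioi (a + δ), f y := by
  rw [← (measurePreserving_add_right volume δ).setIntegral_preimage_emb
    (measurableEmbedding_addRight δ) f (Ioi (a + δ))]
  simp

namespace Depol

variable {s : Fin 3 → ℝ} {t δ : ℝ}

/-- The function `g` of the statement, with `s j` in place of `c j ^ 2`. -/
noncomputable def semiAxisProd (s : Fin 3 → ℝ) (t : ℝ) : ℝ :=
  √((s 0 + t) * (s 1 + t) * (s 2 + t))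

noncomputable def depolIntegrand (s : Fin 3 → ℝ) (j : Fin 3) (t : ℝ) : ℝ :=
  1 / ((s j + t) * semiAxisProd s t)

noncomputable def semiAxisDecay (s : Fin 3 → ℝ) (t : ℝ) : ℝ :=
  ((s 0 + t)⁻¹ + (s 1 + t)⁻¹ + (s 2 + t)⁻¹) / (2 * semiAxisProd s t)

@[fun_prop]
lemma continuous_semiAxisProd (s : Fin 3 → ℝ) : Continuous (semiAxisProd s) := by
  unfold semiAxisProd; fun_prop

lemma semiAxisProd_pos (ht : ∀ i, 0 < s i + t) : 0 < semiAxisProd s t :=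
  Real.sqrt_pos.2 (by have := ht 0; have := ht 1; have := ht 2; positivity)

lemma semiAxisProd_shift (s : Fin 3 → ℝ) (δ t : ℝ) :
    semiAxisProd (fun i => s i + δ) t = semiAxisProd s (t + δ) := by
  simp only [semiAxisProd, add_right_comm _ δ t, add_assoc]

lemma depolIntegrand_shift (s : Fin 3 → ℝ) (j : Fin 3) (δ t : ℝ) :
    depolIntegrand (fun i => s i + δ) j t = depolIntegrand s j (t + δ) := by
  simp only [depolIntegrand, semiAxisProd_shift, add_right_comm _ δ t, add_assoc]

lemma depol_sqrt (hs : ∀ i, 0 ≤ s i) (j : Fin 3) :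
    depol j (fun i => √(s i)) =
      semiAxisProd s 0 / 2 * ∫ t in Ioi 0, depolIntegrand s j t := by
  simp only [depol, depolIntegrand, semiAxisProd, Real.sq_sqrt (hs _), add_zero]
  rw [Real.sqrt_mul (mul_nonneg (hs 0) (hs 1)), Real.sqrt_mul (hs 0)]

lemma semiAxisDecay_pos (ht : ∀ i, 0 < s i + t) : 0 < semiAxisDecay s t := by
  have := semiAxisProd_pos ht
  have h0 := ht 0; have h1 := ht 1; have h2 := ht 2
  unfold semiAxisDecay
  positivity

lemma depolIntegrand_pos (ht : ∀ i, 0 < s i + t) (j : Fin 3) : 0 < depolIntegrand s j t := by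
  have := semiAxisProd_pos ht
  have := ht j
  unfold depolIntegrand
  positivity

lemma continuousAt_depolIntegrand (ht : ∀ i, 0 < s i + t) (j : Fin 3) :
    ContinuousAt (depolIntegrand s j) t := by
  refine continuousAt_const.div (by unfold semiAxisProd; fun_prop) ?_
  exact (mul_pos (ht j) (semiAxisProd_pos ht)).ne'

lemma continuousAt_semiAxisDecay (ht : ∀ i, 0 < s i + t) :
    ContinuousAt (semiAxisDecay s) t := by
  have := semiAxisProd_pos ht
  unfold semiAxisDecay
  fun_prop (disch := first | exact (ht _).ne' | positivity)

lemma hasDerivAt_neg_inv_semiAxisProd (ht : ∀ i, 0 < s i + t) :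
    HasDerivAt (fun t => -(semiAxisProd s t)⁻¹) (semiAxisDecay s t) t := by
  have h0 := ht 0; have h1 := ht 1; have h2 := ht 2
  have hP : 0 < (s 0 + t) * (s 1 + t) * (s 2 + t) := by positivity
  have hlin (i : Fin 3) : HasDerivAt (fun t => s i + t) 1 t := (hasDerivAt_id t).const_add _
  have hprod : HasDerivAt (fun t => (s 0 + t) * (s 1 + t) * (s 2 + t))
      ((1 * (s 1 + t) + (s 0 + t) * 1) * (s 2 + t) + (s 0 + t) * (s 1 + t) * 1) t :=
    ((hlin 0).mul (hlin 1)).mul (hlin 2)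
  refine ((hprod.sqrt hP.ne').inv (Real.sqrt_pos.2 hP).ne').neg.congr_deriv ?_
  rw [semiAxisDecay, semiAxisProd, neg_div, neg_neg, Real.sq_sqrt hP.le]
  field_simp

lemma depolIntegrand_lt_two_mul_semiAxisDecay (ht : ∀ i, 0 < s i + t) (j : Fin 3) :
    depolIntegrand s j t < 2 * semiAxisDecay s t := by
  have hP := semiAxisProd_pos ht
  have h0 := ht 0; have h1 := ht 1; have h2 := ht 2
  rw [depolIntegrand, semiAxisDecay, ← mul_div_assoc, mul_div_mul_left _ _ two_ne_zero,
    ← div_div, one_div]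
  refine div_lt_div_of_pos_right ?_ hP
  fin_cases j <;> simp <;> linarith [inv_pos.2 h0, inv_pos.2 h1, inv_pos.2 h2]

lemma le_semiAxisProd (hs : ∀ i, 0 ≤ s i) (ht : 1 ≤ t) : t ≤ semiAxisProd s t := by
  have h0 := hs 0; have h1 := hs 1; have h2 := hs 2
  refine Real.le_sqrt_of_sq_le ?_
  calc t ^ 2 ≤ t * t * t := by nlinarith
    _ ≤ _ := by gcongr <;> linarith

lemma tendsto_neg_inv_semiAxisProd_atTop (hs : ∀ i, 0 ≤ s i) :
    Tendsto (fun t => -(semiAxisProd s t)⁻¹) atTop (𝓝 0) := by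
  have hinf : Tendsto (semiAxisProd s) atTop atTop :=
    tendsto_atTop_mono' _ (eventually_ge_atTop 1 |>.mono fun t ht => le_semiAxisProd hs ht)
      tendsto_id
  simpa using (tendsto_inv_atTop_zero.comp hinf).neg

lemma integrableOn_semiAxisDecay (hs : ∀ i, 0 < s i) : IntegrableOn (semiAxisDecay s) (Ioi 0) :=
  integrableOn_Ioi_deriv_of_nonneg'
    (fun _ ht => hasDerivAt_neg_inv_semiAxisProd fun i => add_pos_of_pos_of_nonneg (hs i) ht)
    (fun _ ht => (semiAxisDecay_pos fun i => add_pos_of_pos_of_nonneg (hs i) (le_of_lt ht)).le)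
    (tendsto_neg_inv_semiAxisProd_atTop fun i => (hs i).le)

lemma integrableOn_depolIntegrand (hs : ∀ i, 0 < s i) (j : Fin 3) :
    IntegrableOn (depolIntegrand s j) (Ioi 0) := by
  have hpos (t : ℝ) (ht : t ∈ Ioi 0) : ∀ i, 0 < s i + t :=
    fun i => add_pos_of_pos_of_nonneg (hs i) (le_of_lt ht)
  refine ((integrableOn_semiAxisDecay hs).const_mul 2).mono' ?_ ?_
  · exact ContinuousOn.aestronglyMeasurable
      (fun t ht => (continuousAt_depolIntegrand (hpos t ht) j).continuousWithinAt)
      measurableSet_Ioi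
  · filter_upwards [ae_restrict_mem measurableSet_Ioi] with t ht
    rw [Real.norm_of_nonneg (depolIntegrand_pos (hpos t ht) j).le]
    exact (depolIntegrand_lt_two_mul_semiAxisDecay (hpos t ht) j).le

lemma integral_semiAxisDecay (hs : ∀ i, 0 < s i) (hδ : 0 ≤ δ) :
    ∫ t in 0..δ, semiAxisDecay s t = (semiAxisProd s 0)⁻¹ - (semiAxisProd s δ)⁻¹ := by
  have hpos (t : ℝ) (ht : t ∈ uIcc 0 δ) : ∀ i, 0 < s i + t := by
    rw [uIcc_of_le hδ] at ht
    exact fun i => add_pos_of_pos_of_nonneg (hs i) ht.1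
  rw [intervalIntegral.integral_eq_sub_of_hasDerivAt
    (fun t ht => hasDerivAt_neg_inv_semiAxisProd (hpos t ht))
    (ContinuousOn.intervalIntegrable fun t ht =>
      (continuousAt_semiAxisDecay (hpos t ht)).continuousWithinAt)]
  ring

lemma integral_depolIntegrand_lt (hs : ∀ i, 0 < s i) (hδ : 0 < δ) (j : Fin 3) :
    ∫ t in 0..δ, depolIntegrand s j t <
      2 * ((semiAxisProd s 0)⁻¹ - (semiAxisProd s δ)⁻¹) := by
  have hpos (t : ℝ) (ht : t ∈ Icc 0 δ) : ∀ i, 0 < s i + t :=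
    fun i => add_pos_of_pos_of_nonneg (hs i) ht.1
  have hlt (t : ℝ) (ht : t ∈ Icc 0 δ) : depolIntegrand s j t < 2 * semiAxisDecay s t :=
    depolIntegrand_lt_two_mul_semiAxisDecay (hpos t ht) j
  rw [← integral_semiAxisDecay hs hδ.le, ← intervalIntegral.integral_const_mul]
  exact intervalIntegral.integral_lt_integral_of_continuousOn_of_le_of_exists_lt hδ
    (fun t ht => (continuousAt_depolIntegrand (hpos t ht) j).continuousWithinAt)
    (fun t ht => ((continuousAt_semiAxisDecay (hpos t ht)).const_mul 2).continuousWithinAt)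
    (fun t ht => (hlt t (Ioc_subset_Icc_self ht)).le)
    ⟨0, left_mem_Icc.2 hδ.le, hlt 0 (left_mem_Icc.2 hδ.le)⟩

lemma depol_sub_mul_depol_shift (hs : ∀ i, 0 < s i) (hδ : 0 ≤ δ) (j : Fin 3) :
    depol j (fun i => √(s i)) -
        semiAxisProd s 0 / semiAxisProd s δ * depol j (fun i => √(s i + δ)) =
      semiAxisProd s 0 / 2 * ∫ t in 0..δ, depolIntegrand s j t := by
  have hs' (i : Fin 3) : 0 ≤ s i + δ := add_nonneg (hs i).le hδ
  have hint := integrableOn_depolIntegrand hs j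
  have hsplit : ∫ t in Ioi 0, depolIntegrand s j t =
      (∫ t in 0..δ, depolIntegrand s j t) + ∫ t in Ioi δ, depolIntegrand s j t := by
    rw [intervalIntegral.integral_of_le hδ, ← setIntegral_union Ioc_disjoint_Ioi_same
      measurableSet_Ioi (hint.mono_set Ioc_subset_Ioi_self) (hint.mono_set (Ioi_subset_Ioi hδ)),
      Ioc_union_Ioi_eq_Ioi hδ]
  have hshift : ∫ t in Ioi 0, depolIntegrand (fun i => s i + δ) j t =
      ∫ t in Ioi δ, depolIntegrand s j t := by
    simp only [depolIntegrand_shift, setIntegral_Ioi_comp_add_right, zero_add]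
  have hδpos : semiAxisProd s δ ≠ 0 :=
    (semiAxisProd_pos fun i => add_pos_of_pos_of_nonneg (hs i) hδ).ne'
  rw [depol_sqrt (fun i => (hs i).le), depol_sqrt hs', hshift, semiAxisProd_shift, zero_add,
    hsplit]
  field_simp
  ring

theorem depol_sub_mul_depol_shift_lt (hs : ∀ i, 0 < s i) (hδ : 0 < δ) (j : Fin 3) :
    depol j (fun i => √(s i)) -
        semiAxisProd s 0 / semiAxisProd s δ * depol j (fun i => √(s i + δ)) <
      1 - semiAxisProd s 0 / semiAxisProd s δ := by
  have h0 : 0 < semiAxisProd s 0 := semiAxisProd_pos fun i => by simpa using hs i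
  have hlt := integral_depolIntegrand_lt hs hδ j
  rw [depol_sub_mul_depol_shift hs hδ.le]
  calc semiAxisProd s 0 / 2 * ∫ t in 0..δ, depolIntegrand s j t
      < semiAxisProd s 0 / 2 * (2 * ((semiAxisProd s 0)⁻¹ - (semiAxisProd s δ)⁻¹)) := by
        gcongr
    _ = 1 - semiAxisProd s 0 / semiAxisProd s δ := by field_simp

end Depol

open Depol in
/-- Upper bound for `K`: fix positive `c₁, c₂, c₃` and `0 ≤ ρ_c < ρ_e`;
let `g(t) = √((c₁²+t)(c₂²+t)(c₃²+t))`, `θ₁ = g(ρ_c)/g(ρ_e)`, `θ₂ = 1 − θ₁`,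
`l_{cj} = √(c_j²+ρ_c)`, `l_{ej} = √(c_j²+ρ_e)`.  Then
`K = d_{c1} − θ₁ d_{e1}` satisfies `K < θ₂ < 1`. -/
theorem K_lt_theta2 (c : Fin 3 → ℝ) (hc : ∀ j, 0 < c j)
    (ρc ρe : ℝ) (hρc : 0 ≤ ρc) (hρ : ρc < ρe)
    (g : ℝ → ℝ) (hg : ∀ t, g t = Real.sqrt ((c 0 ^ 2 + t) * (c 1 ^ 2 + t) * (c 2 ^ 2 + t)))
    (θ₁ θ₂ : ℝ) (hθ₁ : θ₁ = g ρc / g ρe) (hθ₂ : θ₂ = 1 - θ₁)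
    (lc le : Fin 3 → ℝ)
    (hlc : ∀ j, lc j = Real.sqrt (c j ^ 2 + ρc))
    (hle : ∀ j, le j = Real.sqrt (c j ^ 2 + ρe))
    (K : ℝ) (hK : K = depol 0 lc - θ₁ * depol 0 le) :
    K < θ₂ ∧ θ₂ < 1 := by
  set s : Fin 3 → ℝ := fun j => c j ^ 2 + ρc
  have hs (j : Fin 3) : 0 < s j := by have := hc j; positivity
  have hδ : 0 < ρe - ρc := sub_pos.2 hρ
  have hshift (j : Fin 3) : s j + (ρe - ρc) = c j ^ 2 + ρe := by ring
  have hlc' : lc = fun j => √(s j) := funext hlc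
  have hle' : le = fun j => √(s j + (ρe - ρc)) := funext fun j => by rw [hshift, hle]
  have hθ₁' : θ₁ = semiAxisProd s 0 / semiAxisProd s (ρe - ρc) := by
    simp only [hθ₁, hg, semiAxisProd, s, add_zero, add_assoc, add_sub_cancel]
  have hθ₁_pos : 0 < θ₁ := by
    rw [hθ₁']
    exact div_pos (semiAxisProd_pos fun i => by simpa using hs i)
      (semiAxisProd_pos fun i => add_pos (hs i) hδ)
  refine ⟨?_, by linarith⟩
  rw [hK, hθ₂, hθ₁', hlc', hle']
  exact depol_sub_mul_depol_shift_lt hs hδ 0
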